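/- arXiv:2404.18108 — 2 statements merged into one kernel-verified Lean document; each statement's English description precedes it below -/
import Mathlib

section
/- Let γ > 1, let h(ρ) = ρ^γ/(γ−1), and let 0 < δ ≤ M̄ < ∞. Then there exist a real number R ≥ M̄ + 1 and constants C₁, C₂ > 0 (depending only on γ, δ, M̄) such that for every ρ ≥ 0 and every ρ̄ ∈ [δ, M̄]: if ρ ∈ [0, R] then h(ρ | ρ̄) ≥ C₁ |ρ − ρ̄|², and if ρ > R then h(ρ | ρ̄) ≥ C₂ |ρ − ρ̄|^γ. -/
/-!
On a compact interval `[a, R]` with `a > 0` the second derivative `γ x^(γ-2)` of `h` is bounded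
below by a positive constant, so `h` is strongly convex there and its Bregman divergence
`h(ρ | σ)` is at least quadratic in `ρ - σ`. Since `x^(γ-2)` vanishes at `0` when `γ > 2`,
densities below `a = (γ - 1) δ / (2γ)` are handled separately: there the tangent term
`γ σ^(γ-1) ρ` is at most half of `(γ - 1) σ^γ`, so `h(ρ | σ) ≥ σ^γ / 2 ≥ δ^γ / 2`, while
`|ρ - σ| ≤ M`. For large `ρ`, `ρ^γ` dominates the tangent term and `(ρ - σ)^γ ≤ ρ^γ`.
-/

/-- Internal energy function `h(ρ) = ρ^γ/(γ-1)`. -/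
noncomputable def internalEnergy (γ ρ : ℝ) : ℝ := ρ ^ γ / (γ - 1)

/-- Relative internal energy `h(ρ|σ) = h(ρ) - h(σ) - h'(σ)(ρ - σ)`,
where `h'(σ) = γ σ^(γ-1)/(γ-1)`. -/
noncomputable def relInternalEnergy (γ ρ σ : ℝ) : ℝ :=
  internalEnergy γ ρ - internalEnergy γ σ - (γ / (γ - 1)) * σ ^ (γ - 1) * (ρ - σ)

open Set Filter

theorem ConvexOn.add_mul_sub_le_of_hasDerivAt {S : Set ℝ} {f : ℝ → ℝ} {f' x y : ℝ}
    (hf : ConvexOn ℝ S f) (hx : x ∈ S) (hy : y ∈ S) (hd : HasDerivAt f f' x) :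
    f x + f' * (y - x) ≤ f y := by
  rcases lt_trichotomy x y with hxy | rfl | hyx
  · have h := hf.le_slope_of_hasDerivAt hx hy hxy hd
    rw [slope_def_field, le_div_iff₀ (sub_pos.2 hxy)] at h
    linarith
  · simp
  · have h := hf.slope_le_of_hasDerivAt hy hx hyx hd
    rw [slope_def_field, div_le_iff₀ (sub_pos.2 hyx)] at h
    linarith

theorem sq_le_bregman_of_convexOn_sub_sq {S : Set ℝ} {f : ℝ → ℝ} {f' m x y : ℝ}
    (hg : ConvexOn ℝ S fun t => f t - m / 2 * t ^ 2) (hx : x ∈ S) (hy : y ∈ S)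
    (hd : HasDerivAt f f' x) :
    m / 2 * (y - x) ^ 2 ≤ f y - f x - f' * (y - x) := by
  have hd' : HasDerivAt (fun t => f t - m / 2 * t ^ 2) (f' - m * x) x :=
    (hd.sub ((hasDerivAt_pow 2 x).const_mul (m / 2))).congr_deriv (by ring)
  have := hg.add_mul_sub_le_of_hasDerivAt hx hy hd'
  nlinarith

theorem min_rpow_le_rpow_of_mem_Icc {a b x : ℝ} (p : ℝ) (ha : 0 < a) (hx : x ∈ Icc a b) :
    min (a ^ p) (b ^ p) ≤ x ^ p := by
  rcases le_total p 0 with hp | hp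
  · exact (min_le_right _ _).trans (Real.rpow_le_rpow_of_nonpos (ha.trans_le hx.1) hx.2 hp)
  · exact (min_le_left _ _).trans (Real.rpow_le_rpow ha.le hx.1 hp)

theorem Real.rpow_sub_one_mul_self {x p : ℝ} (hx : 0 ≤ x) (hp : p ≠ 0) :
    x ^ (p - 1) * x = x ^ p := by
  rw [← Real.rpow_add_one' hx (by simpa using hp), sub_add_cancel]

theorem hasDerivAt_internalEnergy (γ : ℝ) {x : ℝ} (hx : x ≠ 0) :
    HasDerivAt (internalEnergy γ) (γ / (γ - 1) * x ^ (γ - 1)) x :=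
  ((Real.hasDerivAt_rpow_const (Or.inl hx)).div_const (γ - 1)).congr_deriv (by ring)

theorem relInternalEnergy_eq {γ : ℝ} (hγ : 1 < γ) (ρ : ℝ) {σ : ℝ} (hσ : 0 ≤ σ) :
    relInternalEnergy γ ρ σ = (ρ ^ γ + (γ - 1) * σ ^ γ - γ * σ ^ (γ - 1) * ρ) / (γ - 1) := by
  have : γ - 1 ≠ 0 := by linarith
  simp only [relInternalEnergy, internalEnergy]
  field_simp
  rw [← Real.rpow_sub_one_mul_self hσ (by linarith : γ ≠ 0)]
  ring

theorem convexOn_internalEnergy_sub_sq {γ a b : ℝ} (hγ : 1 < γ) (ha : 0 < a) :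
    ConvexOn ℝ (Icc a b) fun x =>
      internalEnergy γ x - γ * min (a ^ (γ - 2)) (b ^ (γ - 2)) / 2 * x ^ 2 := by
  set m := γ * min (a ^ (γ - 2)) (b ^ (γ - 2))
  have hγ1 : γ - 1 ≠ 0 := by linarith
  have hne : ∀ x ∈ interior (Icc a b), x ≠ 0 := fun x hx =>
    (ha.trans (by simpa using hx : x ∈ Ioo a b).1).ne'
  refine convexOn_of_hasDerivWithinAt2_nonneg (convex_Icc a b)
    (f' := fun x => γ / (γ - 1) * x ^ (γ - 1) - m * x) (f'' := fun x => γ * x ^ (γ - 2) - m)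
    ?_ (fun x hx => ?_) (fun x hx => ?_) (fun x hx => ?_)
  · refine ContinuousOn.sub (fun x hx => ?_) (by fun_prop)
    exact (hasDerivAt_internalEnergy γ (ha.trans_le hx.1).ne').continuousAt.continuousWithinAt
  · exact ((hasDerivAt_internalEnergy γ (hne x hx)).sub
      ((hasDerivAt_pow 2 x).const_mul (m / 2))).hasDerivWithinAt.congr_deriv (by ring)
  · refine (((Real.hasDerivAt_rpow_const (Or.inl (hne x hx))).const_mul
      (γ / (γ - 1))).sub ((hasDerivAt_id x).const_mul m)).hasDerivWithinAt.congr_deriv ?_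
    rw [sub_sub, one_add_one_eq_two]
    field_simp
  · have hmin := min_rpow_le_rpow_of_mem_Icc (γ - 2) ha (interior_subset hx)
    have hγ0 : 0 < γ := by linarith
    simp only [m, sub_nonneg]
    gcongr

theorem sq_le_relInternalEnergy_of_mem_Icc {γ a b ρ σ : ℝ} (hγ : 1 < γ) (ha : 0 < a)
    (hρ : ρ ∈ Icc a b) (hσ : σ ∈ Icc a b) :
    γ * min (a ^ (γ - 2)) (b ^ (γ - 2)) / 2 * |ρ - σ| ^ 2 ≤ relInternalEnergy γ ρ σ := by
  rw [sq_abs]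
  exact sq_le_bregman_of_convexOn_sub_sq (convexOn_internalEnergy_sub_sq hγ ha) hσ hρ
    (hasDerivAt_internalEnergy γ (ha.trans_le hσ.1).ne')

theorem rpow_div_two_le_relInternalEnergy {γ ρ σ : ℝ} (hγ : 1 < γ) (hσ : 0 < σ) (hρ : 0 ≤ ρ)
    (hρσ : ρ ≤ (γ - 1) / (2 * γ) * σ) :
    σ ^ γ / 2 ≤ relInternalEnergy γ ρ σ := by
  have hlin : γ * σ ^ (γ - 1) * ρ ≤ (γ - 1) / 2 * σ ^ γ := by
    calc γ * σ ^ (γ - 1) * ρ ≤ γ * σ ^ (γ - 1) * ((γ - 1) / (2 * γ) * σ) := by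
          gcongr
      _ = (γ - 1) / 2 * σ ^ γ := by
        field_simp
        rw [← Real.rpow_sub_one_mul_self hσ.le (by linarith : γ ≠ 0)]
        ring
  rw [relInternalEnergy_eq hγ ρ hσ.le, le_div_iff₀ (by linarith)]
  nlinarith [Real.rpow_nonneg hρ γ]

theorem sq_le_relInternalEnergy_of_le {γ δ M ρ σ : ℝ} (hγ : 1 < γ) (hδ : 0 < δ) (hρ : 0 ≤ ρ)
    (hρδ : ρ ≤ (γ - 1) / (2 * γ) * δ) (hσ : σ ∈ Icc δ M) :
    δ ^ γ / (2 * M ^ 2) * |ρ - σ| ^ 2 ≤ relInternalEnergy γ ρ σ := by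
  have hσ0 : 0 < σ := hδ.trans_le hσ.1
  have hρσ : ρ ≤ (γ - 1) / (2 * γ) * σ := hρδ.trans (by gcongr; exact hσ.1)
  have hρσ' : ρ ≤ σ :=
    hρσ.trans (mul_le_of_le_one_left hσ0.le ((div_le_one (by linarith)).2 (by linarith)))
  have hdist : |ρ - σ| ^ 2 ≤ M ^ 2 := by
    rw [sq_abs]; nlinarith [hσ.2]
  have hM : 0 < M := hδ.trans_le (hσ.1.trans hσ.2)
  calc δ ^ γ / (2 * M ^ 2) * |ρ - σ| ^ 2 ≤ δ ^ γ / (2 * M ^ 2) * M ^ 2 := by gcongr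
    _ = δ ^ γ / 2 := by field_simp
    _ ≤ σ ^ γ / 2 := by gcongr; exact hσ.1
    _ ≤ relInternalEnergy γ ρ σ := rpow_div_two_le_relInternalEnergy hγ hσ0 hρ hρσ

theorem rpow_le_relInternalEnergy_of_le_rpow {γ ρ σ : ℝ} (hγ : 1 < γ) (hσ : 0 < σ)
    (hσρ : σ ≤ ρ) (hρ : 2 * γ * σ ^ (γ - 1) ≤ ρ ^ (γ - 1)) :
    1 / (2 * (γ - 1)) * |ρ - σ| ^ γ ≤ relInternalEnergy γ ρ σ := by
  have hρ0 : 0 < ρ := hσ.trans_le hσρ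
  have hργ := Real.rpow_sub_one_mul_self hρ0.le (by linarith : γ ≠ 0)
  have hdist : |ρ - σ| ^ γ ≤ ρ ^ γ := by
    rw [abs_of_nonneg (sub_nonneg.2 hσρ)]
    exact Real.rpow_le_rpow (sub_nonneg.2 hσρ) (by linarith) (by linarith)
  have hlin : γ * σ ^ (γ - 1) * ρ ≤ ρ ^ γ / 2 := by
    rw [← hργ]; nlinarith
  have hγ1 : 0 < γ - 1 := sub_pos.2 hγ
  rw [relInternalEnergy_eq hγ ρ hσ.le, le_div_iff₀ hγ1]
  calc 1 / (2 * (γ - 1)) * |ρ - σ| ^ γ * (γ - 1) = |ρ - σ| ^ γ / 2 := by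
        field_simp
    _ ≤ ρ ^ γ + (γ - 1) * σ ^ γ - γ * σ ^ (γ - 1) * ρ := by
        nlinarith [Real.rpow_nonneg hσ.le γ]

theorem exists_forall_rpow_ge {γ : ℝ} (hγ : 1 < γ) (c K : ℝ) :
    ∃ R, K ≤ R ∧ ∀ ρ, R ≤ ρ → c ≤ ρ ^ (γ - 1) := by
  obtain ⟨R, hR⟩ := eventually_atTop.1
    ((tendsto_rpow_atTop (by linarith : 0 < γ - 1)).eventually_ge_atTop c)
  exact ⟨max R K, le_max_right _ _, fun ρ hρ => hR ρ ((le_max_left _ _).trans hρ)⟩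

/-- Lower bounds on the relative internal energy: quadratic for bounded densities,
of order γ for large densities. -/
theorem relInternalEnergy_lower_bounds (γ δ M : ℝ) (hγ : 1 < γ) (hδ : 0 < δ) (hδM : δ ≤ M) :
    ∃ (R C₁ C₂ : ℝ), M + 1 ≤ R ∧ 0 < C₁ ∧ 0 < C₂ ∧
      ∀ ρ σ : ℝ, 0 ≤ ρ → σ ∈ Set.Icc δ M →
        (ρ ∈ Set.Icc 0 R → C₁ * |ρ - σ| ^ 2 ≤ relInternalEnergy γ ρ σ) ∧
        (R < ρ → C₂ * |ρ - σ| ^ γ ≤ relInternalEnergy γ ρ σ) := by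
  obtain ⟨R, hMR, hR⟩ := exists_forall_rpow_ge hγ (2 * γ * M ^ (γ - 1)) (M + 1)
  have hM : 0 < M := hδ.trans_le hδM
  have hγ0 : 0 < γ := by linarith
  have hR0 : 0 < R := by linarith
  set a := (γ - 1) / (2 * γ) * δ
  have ha : 0 < a := by have := sub_pos.2 hγ; positivity
  have haδ : a ≤ δ := mul_le_of_le_one_left hδ.le ((div_le_one (by positivity)).2 (by linarith))
  refine ⟨R, min (γ * min (a ^ (γ - 2)) (R ^ (γ - 2)) / 2) (δ ^ γ / (2 * M ^ 2)),
    1 / (2 * (γ - 1)), hMR, lt_min (by positivity) (by positivity), one_div_pos.2 (by linarith),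
    fun ρ σ hρ hσ => ⟨fun hρR => ?_, fun hRρ => ?_⟩⟩
  · rcases le_total ρ a with hρa | haρ
    · exact (mul_le_mul_of_nonneg_right (min_le_right _ _) (by positivity)).trans
        (sq_le_relInternalEnergy_of_le hγ hδ hρ hρa hσ)
    · exact (mul_le_mul_of_nonneg_right (min_le_left _ _) (by positivity)).trans
        (sq_le_relInternalEnergy_of_mem_Icc hγ ha ⟨haρ, hρR.2⟩
          ⟨haδ.trans hσ.1, by linarith [hσ.2]⟩)
  · have hσ0 : 0 < σ := hδ.trans_le hσ.1
    have hσM : 2 * γ * σ ^ (γ - 1) ≤ 2 * γ * M ^ (γ - 1) := by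
      have := sub_pos.2 hγ
      gcongr
      exact hσ.2
    exact rpow_le_relInternalEnergy_of_le_rpow hγ hσ0 (by linarith [hσ.2])
      (hσM.trans (hR ρ hRρ.le))
end

section
/- Let d ≥ 1, let 0 < β < d, and set p = 2d/(d+β). There exists a constant C > 0 depending only on d and β such that for every f ∈ L^p(ℝ^d): ∫_{ℝ^d} ∫_{ℝ^d} |f(x)| |f(y)| |x − y|^{β−d} dx dy ≤ C ‖f‖_{L^p}². -/
open MeasureTheory Set Metric Module Function
open scoped ENNReal

/-!
Lieb's layer-cake proof. Writing `|f| = ∫₀^∞ 1_{|f| > s} ds` in both variables turns the double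
integral into `∫∫ V(s, t) ds dt` with `V(s, t) = ∫_{B_t} ∫_{B_s} |x - y|^(β-d) dx dy` and
`B_s = {|f| > s}`. Since the kernel exceeds a level `τ` only on a ball of volume `≍ τ^(d/(β-d))`,
`∫_B |x - y|^(β-d) dy ≤ A |B|^(β/d)` for every set `B`, so `V(s, t) ≤ A |B_s| |B_t|^(β/d)` and
symmetrically. For `t ≤ s` use this form: Chebyshev's `|B_t| ≤ t^(-p) ‖f‖_p^p` makes
`∫₀^s |B_t|^(β/d) dt` converge, because `p β/d = 2 - p < 1`, and it is `≲ s^(p-1) ‖f‖_p^(2-p)`.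
What is left is `∫₀^∞ |B_s| s^(p-1) ds = ‖f‖_p^p / p`.
-/

lemma lintegral_Ioc_zero_rpow {a s : ℝ} (ha : -1 < a) (hs : 0 ≤ s) :
    ∫⁻ t in Ioc 0 s, ENNReal.ofReal (t ^ a) = ENNReal.ofReal (s ^ (a + 1) / (a + 1)) := by
  have hint : IntegrableOn (fun t : ℝ ↦ t ^ a) (Ioc 0 s) := by
    rw [← intervalIntegrable_iff_integrableOn_Ioc_of_le hs]
    exact intervalIntegral.intervalIntegrable_rpow' ha
  rw [← ofReal_integral_eq_lintegral_ofReal hint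
      ((ae_restrict_mem measurableSet_Ioc).mono fun t ht ↦ Real.rpow_nonneg ht.1.le a),
    ← intervalIntegral.integral_of_le hs, integral_rpow (Or.inl ha),
    Real.zero_rpow (by linarith), sub_zero]

lemma lintegral_Ioi_rpow_of_lt {a c : ℝ} (ha : a < -1) (hc : 0 < c) :
    ∫⁻ t in Ioi c, ENNReal.ofReal (t ^ a) = ENNReal.ofReal (-c ^ (a + 1) / (a + 1)) := by
  rw [← ofReal_integral_eq_lintegral_ofReal (integrableOn_Ioi_rpow_of_lt ha hc)
      ((ae_restrict_mem measurableSet_Ioi).mono fun t ht ↦ Real.rpow_nonneg (hc.trans ht).le a),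
    integral_Ioi_rpow_of_lt ha hc]

lemma lintegral_Ioi_zero_le_of_le_of_le_rpow {φ : ℝ → ℝ≥0∞} {c : ℝ≥0∞} {e t₀ : ℝ}
    (he : e < -1) (ht₀ : 0 < t₀) (hφ : ∀ t, φ t ≤ ENNReal.ofReal (t₀ ^ e))
    (hφ' : ∀ t, t₀ < t → φ t ≤ c * ENNReal.ofReal (t ^ e)) :
    ∫⁻ t in Ioi 0, φ t ≤
      (1 + c * ENNReal.ofReal (-1 / (e + 1))) * ENNReal.ofReal (t₀ ^ (e + 1)) := by
  rw [← Ioc_union_Ioi_eq_Ioi ht₀.le, lintegral_union measurableSet_Ioi Ioc_disjoint_Ioi_same]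
  calc _ ≤ (∫⁻ _ in Ioc 0 t₀, ENNReal.ofReal (t₀ ^ e)) +
        ∫⁻ t in Ioi t₀, c * ENNReal.ofReal (t ^ e) :=
        add_le_add (lintegral_mono hφ) (setLIntegral_mono' measurableSet_Ioi hφ')
    _ = ENNReal.ofReal (t₀ ^ (e + 1)) + c * ENNReal.ofReal (t₀ ^ (e + 1) * (-1 / (e + 1))) := by
        rw [setLIntegral_const, Real.volume_Ioc, sub_zero, ← ENNReal.ofReal_mul (by positivity),
          ← Real.rpow_add_one ht₀.ne', lintegral_const_mul _ (by fun_prop),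
          lintegral_Ioi_rpow_of_lt he ht₀, mul_div_assoc', mul_neg_one]
    _ = _ := by rw [ENNReal.ofReal_mul (by positivity)]; ring

lemma lintegral_lintegral_le_two_mul_of_le_add_swap {β : Type*} [MeasurableSpace β]
    {ν : Measure β} [SFinite ν] {V F : β → β → ℝ≥0∞} (hF : Measurable (uncurry F))
    (hV : ∀ s t, V s t ≤ F s t + F t s) :
    ∫⁻ s, ∫⁻ t, V s t ∂ν ∂ν ≤ 2 * ∫⁻ s, ∫⁻ t, F s t ∂ν ∂ν := by
  calc ∫⁻ s, ∫⁻ t, V s t ∂ν ∂ν ≤ ∫⁻ s, ∫⁻ t, (F s t + F t s) ∂ν ∂ν :=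
        lintegral_mono fun s ↦ lintegral_mono fun t ↦ hV s t
    _ = ∫⁻ s, ∫⁻ t, F s t ∂ν ∂ν + ∫⁻ s, ∫⁻ t, F t s ∂ν ∂ν := by
        rw [lintegral_congr fun s ↦ lintegral_add_left hF.of_uncurry_left _]
        exact lintegral_add_left hF.lintegral_prod_right' _
    _ = 2 * ∫⁻ s, ∫⁻ t, F s t ∂ν ∂ν := by
        rw [lintegral_lintegral_swap (f := fun s t ↦ F t s)
          (hF.comp measurable_swap).aemeasurable, two_mul]

section LayerCake

variable {α : Type*} [MeasurableSpace α] {μ : Measure α} {G : α → ℝ} {p : ℝ}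

lemma lintegral_ofReal_mul_eq_lintegral_setLIntegral_lt (hG : 0 ≤ G) (hGm : Measurable G)
    {W : α → ℝ≥0∞} (hW : Measurable W) :
    ∫⁻ x, ENNReal.ofReal (G x) * W x ∂μ = ∫⁻ s in Ioi 0, ∫⁻ x in {x | s < G x}, W x ∂μ := by
  have h := lintegral_withDensity_eq_lintegral_mul μ hW hGm.ennreal_ofReal
  simp only [Pi.mul_apply] at h
  simp_rw [mul_comm _ (W _)]
  rw [← h, lintegral_eq_lintegral_meas_lt _ (.of_forall hG) hGm.aemeasurable]
  exact lintegral_congr fun s ↦ withDensity_apply W (measurableSet_lt measurable_const hGm)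

lemma lintegral_lintegral_mul_eq_lintegral_lintegral_setLIntegral_lt [SFinite μ] (hG : 0 ≤ G)
    (hGm : Measurable G) {k : α → α → ℝ≥0∞} (hk : Measurable (uncurry k)) :
    ∫⁻ x, ∫⁻ y, ENNReal.ofReal (G x) * ENNReal.ofReal (G y) * k x y ∂μ ∂μ =
      ∫⁻ s in Ioi 0, ∫⁻ t in Ioi 0,
        ∫⁻ y in {y | t < G y}, ∫⁻ x in {x | s < G x}, k x y ∂μ ∂μ := by
  calc ∫⁻ x, ∫⁻ y, ENNReal.ofReal (G x) * ENNReal.ofReal (G y) * k x y ∂μ ∂μ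
      = ∫⁻ x, ENNReal.ofReal (G x) * ∫⁻ y, ENNReal.ofReal (G y) * k x y ∂μ ∂μ := by
        simp_rw [mul_assoc]
        exact lintegral_congr fun x ↦ lintegral_const_mul' _ _ ENNReal.ofReal_ne_top
    _ = ∫⁻ s in Ioi 0, ∫⁻ x in {x | s < G x}, ∫⁻ y, ENNReal.ofReal (G y) * k x y ∂μ ∂μ :=
        lintegral_ofReal_mul_eq_lintegral_setLIntegral_lt hG hGm
          ((hGm.comp measurable_snd).ennreal_ofReal.mul hk).lintegral_prod_right'
    _ = ∫⁻ s in Ioi 0, ∫⁻ y, ENNReal.ofReal (G y) * ∫⁻ x in {x | s < G x}, k x y ∂μ ∂μ := by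
        refine lintegral_congr fun s ↦ ?_
        rw [lintegral_lintegral_swap (by fun_prop)]
        exact lintegral_congr fun y ↦ lintegral_const_mul' _ _ ENNReal.ofReal_ne_top
    _ = _ := lintegral_congr fun s ↦ lintegral_ofReal_mul_eq_lintegral_setLIntegral_lt hG hGm
        (Measurable.lintegral_prod_left' hk)

lemma meas_lt_le_rpow_neg_mul_eLpNorm_rpow (hp : 0 < p) (hG : AEStronglyMeasurable G μ)
    {s : ℝ} (hs : 0 < s) :
    μ {x | s < G x} ≤ ENNReal.ofReal (s ^ (-p)) * eLpNorm G (ENNReal.ofReal p) μ ^ p := by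
  have h := mul_meas_ge_le_pow_eLpNorm' μ (ENNReal.ofReal_pos.mpr hp).ne' ENNReal.ofReal_ne_top
    hG (ENNReal.ofReal s)
  rw [ENNReal.toReal_ofReal hp.le] at h
  have hsub : {x | s < G x} ⊆ {x | ENNReal.ofReal s ≤ ‖G x‖ₑ} := fun x (hx : s < G x) ↦ by
    rw [mem_ofPred_eq, Real.enorm_eq_ofReal_abs]
    exact ENNReal.ofReal_le_ofReal (hx.le.trans (le_abs_self _))
  have hsp : ENNReal.ofReal s ^ p ≠ 0 := by positivity
  calc μ {x | s < G x} ≤ μ {x | ENNReal.ofReal s ≤ ‖G x‖ₑ} := measure_mono hsub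
    _ ≤ eLpNorm G (ENNReal.ofReal p) μ ^ p / ENNReal.ofReal s ^ p :=
        (ENNReal.le_div_iff_mul_le (.inl hsp) (.inl (by finiteness))).mpr (by rwa [mul_comm])
    _ = ENNReal.ofReal (s ^ (-p)) * eLpNorm G (ENNReal.ofReal p) μ ^ p := by
        rw [ENNReal.div_eq_inv_mul, ← ENNReal.rpow_neg, ENNReal.ofReal_rpow_of_pos hs]

lemma lintegral_Ioc_meas_lt_rpow_le (hp : 0 < p) {q : ℝ} (hq : 0 ≤ q) (hpq : p * q < 1)
    (hG : AEStronglyMeasurable G μ) {s : ℝ} (hs : 0 ≤ s) :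
    ∫⁻ t in Ioc 0 s, μ {x | t < G x} ^ q ≤
      ENNReal.ofReal (s ^ (1 - p * q) / (1 - p * q)) *
        eLpNorm G (ENNReal.ofReal p) μ ^ (p * q) := by
  calc ∫⁻ t in Ioc 0 s, μ {x | t < G x} ^ q
      ≤ ∫⁻ t in Ioc 0 s, ENNReal.ofReal (t ^ (-(p * q))) *
          eLpNorm G (ENNReal.ofReal p) μ ^ (p * q) := by
        refine setLIntegral_mono' measurableSet_Ioc fun t ht ↦ ?_
        calc μ {x | t < G x} ^ q
            ≤ (ENNReal.ofReal (t ^ (-p)) * eLpNorm G (ENNReal.ofReal p) μ ^ p) ^ q := by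
              gcongr
              exact meas_lt_le_rpow_neg_mul_eLpNorm_rpow hp hG ht.1
          _ = _ := by
              rw [ENNReal.mul_rpow_of_nonneg _ _ hq, ← ENNReal.rpow_mul,
                ENNReal.ofReal_rpow_of_pos (Real.rpow_pos_of_pos ht.1 _), ← Real.rpow_mul ht.1.le,
                neg_mul]
    _ = _ := by
        rw [lintegral_mul_const _ (by fun_prop), lintegral_Ioc_zero_rpow (by linarith) hs,
          neg_add_eq_sub]

lemma lintegral_meas_lt_mul_rpow_eq (hG : 0 ≤ G) (hGm : AEStronglyMeasurable G μ) (hp : 0 < p) :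
    ∫⁻ t in Ioi 0, μ {x | t < G x} * ENNReal.ofReal (t ^ (p - 1)) =
      ENNReal.ofReal p⁻¹ * eLpNorm G (ENNReal.ofReal p) μ ^ p := by
  have h := lintegral_rpow_eq_lintegral_meas_lt_mul μ (.of_forall hG) hGm.aemeasurable hp
  rw [eLpNorm_eq_eLpNorm' (ENNReal.ofReal_pos.mpr hp).ne' ENNReal.ofReal_ne_top,
    ENNReal.toReal_ofReal hp.le, ← lintegral_rpow_enorm_eq_rpow_eLpNorm' hp]
  have hGp : ∀ x, ‖G x‖ₑ ^ p = ENNReal.ofReal (G x ^ p) := fun x ↦ by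
    rw [Real.enorm_of_nonneg (hG x), ENNReal.ofReal_rpow_of_nonneg (hG x) hp.le]
  rw [lintegral_congr hGp, h, ← mul_assoc, ← ENNReal.ofReal_mul (by positivity),
    inv_mul_cancel₀ hp.ne', ENNReal.ofReal_one, one_mul]

lemma lintegral_meas_lt_mul_lintegral_Ioc_meas_lt_rpow_le {q : ℝ} (hq0 : 0 ≤ q) (hq1 : q < 1)
    (hpq : p * (1 + q) = 2) (hG : 0 ≤ G) (hGm : AEStronglyMeasurable G μ) :
    ∫⁻ s in Ioi 0, μ {x | s < G x} * ∫⁻ t in Ioc 0 s, μ {x | t < G x} ^ q ≤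
      ENNReal.ofReal (p⁻¹ * (p - 1)⁻¹) * eLpNorm G (ENNReal.ofReal p) μ ^ 2 := by
  have hp1 : 1 < p := by nlinarith
  have hpq' : p * q = 2 - p := by linarith
  set N := eLpNorm G (ENNReal.ofReal p) μ
  have hm : Measurable fun t ↦ μ {x | t < G x} := Antitone.measurable fun s t hst ↦
    measure_mono fun x (hx : t < G x) ↦ hst.trans_lt hx
  calc _ ≤ ∫⁻ s in Ioi 0, ENNReal.ofReal (p - 1)⁻¹ * N ^ (p * q) *
        (μ {x | s < G x} * ENNReal.ofReal (s ^ (p - 1))) := by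
        refine setLIntegral_mono' measurableSet_Ioi fun s (hs : 0 < s) ↦ ?_
        grw [lintegral_Ioc_meas_lt_rpow_le (p := p) (by linarith) hq0 (by linarith) hGm hs.le]
        rw [hpq', show 1 - (2 - p) = p - 1 by ring, div_eq_mul_inv,
          ENNReal.ofReal_mul (by positivity)]
        exact le_of_eq (by ring)
    _ = ENNReal.ofReal (p - 1)⁻¹ * N ^ (p * q) * (ENNReal.ofReal p⁻¹ * N ^ p) := by
        rw [lintegral_const_mul _ (f := fun s ↦ μ {x | s < G x} * ENNReal.ofReal (s ^ (p - 1)))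
            (hm.mul (by fun_prop)), lintegral_meas_lt_mul_rpow_eq hG hGm (by linarith)]
    _ = ENNReal.ofReal (p⁻¹ * (p - 1)⁻¹) * N ^ 2 := by
        rw [ENNReal.ofReal_mul (by positivity), ← ENNReal.rpow_two, ← hpq,
          mul_one_add, ENNReal.rpow_add_of_nonneg _ _ (by linarith) (by positivity)]
        ring

lemma setLIntegral_setLIntegral_le {k : α → α → ℝ≥0∞} {A : ℝ≥0∞} {q : ℝ}
    (hA : ∀ x B, ∫⁻ y in B, k x y ∂μ ≤ A * μ B ^ q) (S T : Set α) :
    ∫⁻ x in S, ∫⁻ y in T, k x y ∂μ ∂μ ≤ A * μ T ^ q * μ S :=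
  (lintegral_mono fun x ↦ hA x T).trans_eq (setLIntegral_const S _)

lemma setLIntegral_setLIntegral_le_min [SFinite μ] {k : α → α → ℝ≥0∞} (hk : Measurable (uncurry k))
    (hk_symm : ∀ x y, k x y = k y x) {A : ℝ≥0∞} {q : ℝ}
    (hA : ∀ x B, ∫⁻ y in B, k x y ∂μ ≤ A * μ B ^ q) (S T : Set α) :
    ∫⁻ y in T, ∫⁻ x in S, k x y ∂μ ∂μ ≤ min (A * μ T ^ q * μ S) (A * μ S ^ q * μ T) := by
  refine le_min ?_ ?_
  · rw [lintegral_lintegral_swap (f := fun y x ↦ k x y) (hk.comp measurable_swap).aemeasurable]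
    exact setLIntegral_setLIntegral_le hA S T
  · simpa only [hk_symm] using setLIntegral_setLIntegral_le hA T S

theorem lintegral_lintegral_mul_le_of_setLIntegral_le [SFinite μ] {k : α → α → ℝ≥0∞}
    (hk : Measurable (uncurry k)) (hk_symm : ∀ x y, k x y = k y x) {A : ℝ≥0∞} {q : ℝ}
    (hq0 : 0 ≤ q) (hq1 : q < 1) (hpq : p * (1 + q) = 2)
    (hA : ∀ x B, ∫⁻ y in B, k x y ∂μ ≤ A * μ B ^ q) (hG : 0 ≤ G) (hGm : Measurable G) :
    ∫⁻ x, ∫⁻ y, ENNReal.ofReal (G x) * ENNReal.ofReal (G y) * k x y ∂μ ∂μ ≤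
      2 * A * ENNReal.ofReal (p⁻¹ * (p - 1)⁻¹) * eLpNorm G (ENNReal.ofReal p) μ ^ 2 := by
  set m : ℝ → ℝ≥0∞ := fun t ↦ μ {x | t < G x}
  have hm : Measurable m := Antitone.measurable fun s t hst ↦
    measure_mono fun x (hx : t < G x) ↦ hst.trans_lt hx
  -- for `t ≤ s` keep the power `q` on `m t`, which is integrable in `t` near `0`
  set F : ℝ → ℝ → ℝ≥0∞ := fun s t ↦ if t ≤ s then A * m s * m t ^ q else 0
  have hF : Measurable (uncurry F) :=
    Measurable.ite (measurableSet_le measurable_snd measurable_fst)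
      (((hm.comp measurable_fst).const_mul A).mul ((hm.comp measurable_snd).pow_const q))
      measurable_const
  have hV : ∀ s t, ∫⁻ y in {y | t < G y}, ∫⁻ x in {x | s < G x}, k x y ∂μ ∂μ ≤
      F s t + F t s := fun s t ↦ by
    refine (setLIntegral_setLIntegral_le_min hk hk_symm hA _ _).trans ?_
    rcases le_or_gt t s with hts | hst
    · simp only [F, if_pos hts, mul_right_comm A]
      exact (min_le_left _ _).trans le_self_add
    · simp only [F, if_neg hst.not_ge, if_pos hst.le, mul_right_comm A]
      exact (min_le_right _ _).trans le_add_self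
  have hF_Ioi : ∀ s, ∫⁻ t in Ioi 0, F s t = A * (m s * ∫⁻ t in Ioc 0 s, m t ^ q) := fun s ↦ by
    rw [← mul_assoc, ← lintegral_const_mul _ (hm.pow_const q), ← Ioi_inter_Iic, inter_comm,
      ← Measure.restrict_restrict measurableSet_Iic, ← lintegral_indicator measurableSet_Iic]
    exact lintegral_congr fun t ↦ by simp only [F, indicator_apply, mem_Iic]
  have hI : Measurable fun s ↦ ∫⁻ t in Ioc 0 s, m t ^ q := Monotone.measurable fun s s' hss' ↦
    lintegral_mono_set (Ioc_subset_Ioc_right hss')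
  calc ∫⁻ x, ∫⁻ y, ENNReal.ofReal (G x) * ENNReal.ofReal (G y) * k x y ∂μ ∂μ
      = ∫⁻ s in Ioi 0, ∫⁻ t in Ioi 0,
          ∫⁻ y in {y | t < G y}, ∫⁻ x in {x | s < G x}, k x y ∂μ ∂μ :=
        lintegral_lintegral_mul_eq_lintegral_lintegral_setLIntegral_lt hG hGm hk
    _ ≤ 2 * ∫⁻ s in Ioi 0, ∫⁻ t in Ioi 0, F s t :=
        lintegral_lintegral_le_two_mul_of_le_add_swap hF hV
    _ = 2 * A * ∫⁻ s in Ioi 0, m s * ∫⁻ t in Ioc 0 s, m t ^ q := by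
        rw [lintegral_congr hF_Ioi, mul_assoc,
          lintegral_const_mul A (f := fun s ↦ m s * ∫⁻ t in Ioc 0 s, m t ^ q) (hm.mul hI)]
    _ ≤ 2 * A * (ENNReal.ofReal (p⁻¹ * (p - 1)⁻¹) * eLpNorm G (ENNReal.ofReal p) μ ^ 2) := by
        gcongr
        exact lintegral_meas_lt_mul_lintegral_Ioc_meas_lt_rpow_le hq0 hq1 hpq hG
          hGm.aestronglyMeasurable
    _ = _ := by ring

end LayerCake

section RieszKernel

variable {E : Type*} [NormedAddCommGroup E] [NormedSpace ℝ E] [FiniteDimensional ℝ E]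
  [MeasurableSpace E] [BorelSpace E] (μ : Measure E) [μ.IsAddHaarMeasure]

lemma addHaar_lt_rpow_norm_sub_le {γ : ℝ} (hγ : γ < 0) (x : E) {t : ℝ} (ht : 0 < t) :
    μ {y | t < ‖x - y‖ ^ γ} ≤ ENNReal.ofReal (t ^ (finrank ℝ E / γ)) * μ (ball 0 1) := by
  calc μ {y | t < ‖x - y‖ ^ γ} ≤ μ (ball x (t ^ γ⁻¹)) := by
        refine measure_mono fun y (hy : t < ‖x - y‖ ^ γ) ↦ ?_
        have hxy : 0 < ‖x - y‖ := (norm_nonneg _).lt_of_ne fun h ↦ by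
          rw [← h, Real.zero_rpow hγ.ne] at hy
          exact hy.not_gt ht
        rw [mem_ball, dist_comm, dist_eq_norm]
        exact (Real.lt_rpow_inv_iff_of_neg hxy ht hγ).mpr hy
    _ = ENNReal.ofReal (t ^ (finrank ℝ E / γ)) * μ (ball 0 1) := by
        rw [Measure.addHaar_ball_of_pos μ x (by positivity), ← Real.rpow_natCast,
          ← Real.rpow_mul ht.le, inv_mul_eq_div]

theorem setLIntegral_rpow_norm_sub_le {β : ℝ} (hβ0 : 0 < β) (hβd : β < finrank ℝ E)
    (x : E) (B : Set E) :
    ∫⁻ y in B, ENNReal.ofReal (‖x - y‖ ^ (β - finrank ℝ E)) ∂μ ≤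
      (1 + μ (ball 0 1) * ENNReal.ofReal ((finrank ℝ E - β) / β)) *
        μ B ^ (β / finrank ℝ E) := by
  set d : ℝ := (finrank ℝ E : ℝ)
  have hd : 0 < d := hβ0.trans hβd
  have hγ : β - d < 0 := by linarith
  set e := d / (β - d) with he_def
  have he : e + 1 = β / (β - d) := by rw [he_def, div_add_one hγ.ne]; ring_nf
  have he1 : e < -1 := by linarith [div_neg_of_pos_of_neg hβ0 hγ]
  rcases eq_or_ne (μ B) 0 with hB0 | hB0
  · simp [Measure.restrict_eq_zero.mpr hB0]
  rcases eq_or_ne (μ B) ∞ with hBt | hBt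
  · rw [hBt, ENNReal.top_rpow_of_pos (by positivity), ENNReal.mul_top (by simp)]
    exact le_top
  -- `t₀ ^ e = μ B`: above the level `t₀` the ball bound beats the trivial bound `μ B`
  set t₀ := (μ B).toReal ^ e⁻¹
  have hb : 0 < (μ B).toReal := ENNReal.toReal_pos hB0 hBt
  have ht₀ : 0 < t₀ := by positivity
  have hB_eq : μ B = ENNReal.ofReal (t₀ ^ e) := by
    rw [← Real.rpow_mul hb.le, inv_mul_cancel₀ (by linarith), Real.rpow_one,
      ENNReal.ofReal_toReal hBt]
  have hBpow : μ B ^ (β / d) = ENNReal.ofReal (t₀ ^ (e + 1)) := by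
    rw [hB_eq, ENNReal.ofReal_rpow_of_pos (by positivity), ← Real.rpow_mul ht₀.le, he, he_def]
    congr 2
    field_simp
  have hconst : -1 / (e + 1) = (d - β) / β := by
    rw [he, div_div_eq_mul_div]
    ring
  rw [lintegral_eq_lintegral_meas_lt _ (.of_forall fun y ↦ by positivity) (by fun_prop), hBpow,
    ← hconst]
  refine lintegral_Ioi_zero_le_of_le_of_le_rpow he1 ht₀ (fun t ↦ ?_) (fun t ht ↦ ?_)
  · exact hB_eq ▸ (measure_mono (subset_univ _)).trans (Measure.restrict_apply_univ B).le
  · exact mul_comm (μ (ball 0 1)) _ ▸ (Measure.restrict_apply_le B _).trans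
      (addHaar_lt_rpow_norm_sub_le μ hγ x (ht₀.trans ht))

theorem exists_lintegral_lintegral_enorm_mul_rpow_norm_sub_le {β : ℝ} (hβ0 : 0 < β)
    (hβd : β < finrank ℝ E) :
    ∃ C : ℝ≥0∞, C ≠ ∞ ∧ ∀ f : E → ℝ, AEStronglyMeasurable f μ →
      ∫⁻ x, ∫⁻ y, ‖f x‖ₑ * ‖f y‖ₑ * ENNReal.ofReal (‖x - y‖ ^ (β - finrank ℝ E)) ∂μ ∂μ ≤
        C * eLpNorm f (ENNReal.ofReal (2 * finrank ℝ E / (finrank ℝ E + β))) μ ^ 2 := by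
  set d : ℝ := (finrank ℝ E : ℝ)
  have hd : 0 < d := hβ0.trans hβd
  have hp : 2 * d / (d + β) * (1 + β / d) = 2 := by
    have : d + β ≠ 0 := by positivity
    field_simp
  refine ⟨2 * (1 + μ (ball 0 1) * ENNReal.ofReal ((d - β) / β)) *
    ENNReal.ofReal ((2 * d / (d + β))⁻¹ * (2 * d / (d + β) - 1)⁻¹),
    by finiteness [(measure_ball_lt_top (μ := μ) (x := 0) (r := 1)).ne], fun f hf ↦ ?_⟩
  have hkernel := lintegral_lintegral_mul_le_of_setLIntegral_le (μ := μ)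
    (k := fun x y ↦ ENNReal.ofReal (‖x - y‖ ^ (β - d))) (by fun_prop)
    (fun x y ↦ by rw [norm_sub_rev]) (by positivity) ((div_lt_one hd).mpr hβd) hp
    (setLIntegral_rpow_norm_sub_le μ hβ0 hβd) (G := fun x ↦ ‖hf.mk f x‖)
    (fun x ↦ norm_nonneg _) hf.stronglyMeasurable_mk.measurable.norm
  rw [eLpNorm_norm, ← eLpNorm_congr_ae hf.ae_eq_mk] at hkernel
  refine (lintegral_congr_ae ?_).trans_le hkernel
  filter_upwards [hf.ae_eq_mk] with x hx
  refine lintegral_congr_ae ?_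
  filter_upwards [hf.ae_eq_mk] with y hy
  rw [hx, hy, ofReal_norm, ofReal_norm]

end RieszKernel

lemma integral_integral_le_of_lintegral_lintegral_enorm_le {β : Type*} [MeasurableSpace β]
    {ν : Measure β} {α : Type*} [MeasurableSpace α] {μ : Measure α} {F : α → β → ℝ}
    {M : ℝ≥0∞} (hM : M ≠ ∞) (h : ∫⁻ x, ∫⁻ y, ‖F x y‖ₑ ∂ν ∂μ ≤ M) :
    ∫ x, ∫ y, F x y ∂ν ∂μ ≤ M.toReal := by
  refine (le_abs_self _).trans ?_
  rw [← Real.norm_eq_abs, ← toReal_enorm]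
  exact ENNReal.toReal_mono hM <| (enorm_integral_le_lintegral_enorm _).trans <|
    (lintegral_mono fun x ↦ enorm_integral_le_lintegral_enorm _).trans h

theorem hardy_littlewood_sobolev_diagonal_general (d : ℕ) (β : ℝ)
    (hβ0 : 0 < β) (hβd : β < d) :
    ∃ C : ℝ, 0 < C ∧ ∀ f : EuclideanSpace ℝ (Fin d) → ℝ,
      MemLp f (ENNReal.ofReal (2 * d / (d + β))) volume →
      ∫ x, ∫ y, |f x| * |f y| * ‖x - y‖ ^ (β - d) ∂volume ∂volume ≤
        C * (eLpNorm f (ENNReal.ofReal (2 * d / (d + β))) volume).toReal ^ 2 := by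
  obtain ⟨C, hC, hHLS⟩ := exists_lintegral_lintegral_enorm_mul_rpow_norm_sub_le
    (volume : Measure (EuclideanSpace ℝ (Fin d))) hβ0 (by rwa [finrank_euclideanSpace_fin])
  rw [finrank_euclideanSpace_fin] at hHLS
  refine ⟨C.toReal + 1, by positivity, fun f hf ↦ ?_⟩
  have hnorm : ∀ x y : EuclideanSpace ℝ (Fin d), ‖|f x| * |f y| * ‖x - y‖ ^ (β - d)‖ₑ =
      ‖f x‖ₑ * ‖f y‖ₑ * ENNReal.ofReal (‖x - y‖ ^ (β - d)) := fun x y ↦ by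
    rw [enorm_mul, enorm_mul, Real.enorm_abs, Real.enorm_abs,
      Real.enorm_of_nonneg (Real.rpow_nonneg (norm_nonneg _) _)]
  calc _ ≤ (C * eLpNorm f (ENNReal.ofReal (2 * d / (d + β))) volume ^ 2).toReal :=
        integral_integral_le_of_lintegral_lintegral_enorm_le (by finiteness [hf.eLpNorm_ne_top])
          (by simpa only [hnorm] using hHLS f hf.1)
    _ = C.toReal * (eLpNorm f (ENNReal.ofReal (2 * d / (d + β))) volume).toReal ^ 2 := by
        rw [ENNReal.toReal_mul, ENNReal.toReal_pow]
    _ ≤ _ := by gcongr; linarith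

/-- Hardy–Littlewood–Sobolev inequality, diagonal case: for `0 < β < d` and
`p = 2d/(d+β)`, the double Riesz-type integral is controlled by the squared
`L^p` norm. -/
theorem hardy_littlewood_sobolev_diagonal (d : ℕ) (hd : 1 ≤ d) (β : ℝ)
    (hβ0 : 0 < β) (hβd : β < d) :
    ∃ C : ℝ, 0 < C ∧ ∀ f : EuclideanSpace ℝ (Fin d) → ℝ,
      MemLp f (ENNReal.ofReal (2 * d / (d + β))) volume →
      ∫ x, ∫ y, |f x| * |f y| * ‖x - y‖ ^ (β - d) ∂volume ∂volume ≤
        C * (eLpNorm f (ENNReal.ofReal (2 * d / (d + β))) volume).toReal ^ 2 :=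
  hardy_littlewood_sobolev_diagonal_general d β hβ0 hβd
end
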